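/- arXiv:1905.11465 — 5 statements merged into one kernel-verified Lean document; each statement's English description precedes it below -/
import Mathlib

section
/- Let F : [0,1] → [0,1] be a differentiable convex function with F(0) = 0 (the CDF of a p-value). Then for all a, b ∈ (0,1), we have (F(b) - F(ab)) / (b(1-a)) ≤ (F(1) - F(a)) / (1-a). -/
/-!
The secant slopes of a convex function increase in both endpoints. The left side is the slope of
`F` over `[a b, b]` and the right side its slope over `[a, 1]`, whose endpoints lie to the right
of those of `[a b, b]`.
-/

theorem ConvexOn.secant_le_secant {𝕜 : Type*} [Field 𝕜] [LinearOrder 𝕜] [IsStrictOrderedRing 𝕜]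
    {s : Set 𝕜} {f : 𝕜 → 𝕜} (hf : ConvexOn 𝕜 s f) {x y z w : 𝕜} (hx : x ∈ s) (hy : y ∈ s) (hz : z ∈ s) (hw : w ∈ s)
    (hxy : x < y) (hzw : z < w) (hxz : x ≤ z) (hyw : y ≤ w) :
    (f y - f x) / (y - x) ≤ (f w - f z) / (w - z) :=
  calc (f y - f x) / (y - x)
      ≤ (f w - f x) / (w - x) := hf.secant_mono hx hy hw hxy.ne' (hxy.trans_le hyw).ne' hyw
    _ = (f x - f w) / (x - w) := by rw [← neg_div_neg_eq, neg_sub, neg_sub]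
    _ ≤ (f z - f w) / (z - w) := hf.secant_mono hw hx hz (hxy.trans_le hyw).ne hzw.ne hxz
    _ = (f w - f z) / (w - z) := by rw [← neg_div_neg_eq, neg_sub, neg_sub]

theorem stmt_0_general (F : ℝ → ℝ)
    (hconv : ConvexOn ℝ (Set.Icc (0:ℝ) 1) F) :
    ∀ a ∈ Set.Ioo (0:ℝ) 1, ∀ b ∈ Set.Ioo (0:ℝ) 1,
      (F b - F (a * b)) / (b * (1 - a)) ≤ (F 1 - F a) / (1 - a) := by
  rintro a ⟨ha0, ha1⟩ b ⟨hb0, hb1⟩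
  have hab_lt_b : a * b < b := mul_lt_of_lt_one_left hb0 ha1
  have hab_le_a : a * b ≤ a := mul_le_of_le_one_right ha0.le hb1.le
  have hmem : ∀ t, 0 ≤ t → t ≤ 1 → t ∈ Set.Icc (0:ℝ) 1 := fun t h0 h1 ↦ ⟨h0, h1⟩
  have key := hconv.secant_le_secant (hmem _ (by positivity) (hab_le_a.trans ha1.le))
    (hmem b hb0.le hb1.le) (hmem a ha0.le ha1.le) (hmem 1 zero_le_one le_rfl)
    hab_lt_b ha1 hab_le_a hb1.le
  rwa [show b - a * b = b * (1 - a) by ring] at key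

/-- Lemma 1 (ADDIS): if `F : [0,1] → [0,1]` is a differentiable convex CDF with `F 0 = 0`,
then for all `a, b ∈ (0,1)`, `(F b - F (a*b)) / (b*(1-a)) ≤ (F 1 - F a) / (1-a)`. -/
theorem stmt_0 (F : ℝ → ℝ)
    (hmaps : ∀ t ∈ Set.Icc (0:ℝ) 1, F t ∈ Set.Icc (0:ℝ) 1)
    (hdiff : DifferentiableOn ℝ F (Set.Icc (0:ℝ) 1))
    (hconv : ConvexOn ℝ (Set.Icc (0:ℝ) 1) F)
    (hF0 : F 0 = 0) :
    ∀ a ∈ Set.Ioo (0:ℝ) 1, ∀ b ∈ Set.Ioo (0:ℝ) 1,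
      (F b - F (a * b)) / (b * (1 - a)) ≤ (F 1 - F a) / (1 - a) :=
  stmt_0_general F hconv
end

section
/- Let Z ~ N(μ, 1) with μ < 0 and define the p-value P = Φ(-Z), where Φ is the standard Gaussian CDF. Then the CDF of P is convex on [0,1]; equivalently, the density of P is monotonically increasing, so P is uniformly conservative. -/
open MeasureTheory ProbabilityTheory Set

namespace Stmt5Aux

lemma ratio' (μ x : ℝ) :
    gaussianPDFReal (-μ) 1 x = gaussianPDFReal 0 1 x * Real.exp (-(μ*x) - μ^2/2) := by
  simp only [gaussianPDFReal, NNReal.coe_one, mul_one, sub_zero, mul_assoc, ← Real.exp_add]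
  ring_nf

lemma upper' {μ : ℝ} (hμ : μ < 0) {s : Set ℝ} (hs : MeasurableSet s) {b : ℝ} (hsb : s ⊆ Iic b) :
    ∫ x in s, gaussianPDFReal (-μ) 1 x
      ≤ Real.exp (-(μ*b) - μ^2/2) * ∫ x in s, gaussianPDFReal 0 1 x := by
  rw [← MeasureTheory.integral_const_mul]
  refine setIntegral_mono_on (integrable_gaussianPDFReal (-μ) 1).integrableOn
    (((integrable_gaussianPDFReal 0 1).const_mul _).integrableOn) hs fun x hx => ?_
  rw [ratio' μ x, mul_comm (gaussianPDFReal 0 1 x)]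
  exact mul_le_mul_of_nonneg_right
    (Real.exp_le_exp.2 (by nlinarith [mem_Iic.1 (hsb hx)]))
    (gaussianPDFReal_nonneg 0 1 x)

lemma lower' {μ : ℝ} (hμ : μ < 0) {s : Set ℝ} (hs : MeasurableSet s) {a : ℝ} (hsa : s ⊆ Ici a) :
    Real.exp (-(μ*a) - μ^2/2) * ∫ x in s, gaussianPDFReal 0 1 x
      ≤ ∫ x in s, gaussianPDFReal (-μ) 1 x := by
  rw [← MeasureTheory.integral_const_mul]
  refine setIntegral_mono_on
    (((integrable_gaussianPDFReal 0 1).const_mul _).integrableOn)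
    (integrable_gaussianPDFReal (-μ) 1).integrableOn hs fun x hx => ?_
  rw [ratio' μ x, mul_comm (gaussianPDFReal 0 1 x)]
  exact mul_le_mul_of_nonneg_right
    (Real.exp_le_exp.2 (by nlinarith [mem_Ici.1 (hsa hx)]))
    (gaussianPDFReal_nonneg 0 1 x)

lemma gmeas_toReal (m : ℝ) (s : Set ℝ) :
    ((gaussianReal m 1) s).toReal = ∫ x in s, gaussianPDFReal m 1 x := by
  rw [gaussianReal_apply_eq_integral m one_ne_zero,
    ENNReal.toReal_ofReal (integral_nonneg fun x => gaussianPDFReal_nonneg m 1 x)]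

lemma cdf_diff' (m : ℝ) {a b : ℝ} (hab : a ≤ b) :
    ((gaussianReal m 1) (Iic b)).toReal - ((gaussianReal m 1) (Iic a)).toReal
      = ∫ x in Ioc a b, gaussianPDFReal m 1 x := by
  rw [gmeas_toReal, gmeas_toReal, ← Iic_union_Ioc_eq_Iic hab,
    setIntegral_union (Iic_disjoint_Ioc le_rfl) measurableSet_Ioc
      (integrable_gaussianPDFReal m 1).integrableOn
      (integrable_gaussianPDFReal m 1).integrableOn]
  ring

lemma tail' (m a : ℝ) :
    1 - ((gaussianReal m 1) (Iic a)).toReal = ∫ x in Ioi a, gaussianPDFReal m 1 x := by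
  have h : (∫ x in Iic a, gaussianPDFReal m 1 x) + ∫ x in Ioi a, gaussianPDFReal m 1 x = 1 := by
    rw [← setIntegral_union (Iic_disjoint_Ioi le_rfl) measurableSet_Ioi
      (integrable_gaussianPDFReal m 1).integrableOn
      (integrable_gaussianPDFReal m 1).integrableOn, Iic_union_Ioi,
      setIntegral_univ, integral_gaussianPDFReal_eq_one m one_ne_zero]
  rw [gmeas_toReal]; linarith

lemma flip' (m q : ℝ) :
    ((gaussianReal m 1) (Ici (-q))).toReal = ((gaussianReal (-m) 1) (Iic q)).toReal := by
  rw [gmeas_toReal, gmeas_toReal, integral_Ici_eq_integral_Ioi]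
  have h1 : ∀ x : ℝ, gaussianPDFReal m 1 x = gaussianPDFReal (-m) 1 (-x) := by
    intro x; simp only [gaussianPDFReal]; ring_nf
  calc (∫ x in Ioi (-q), gaussianPDFReal m 1 x)
      = ∫ x in Ioi (-q), gaussianPDFReal (-m) 1 (-x) :=
        setIntegral_congr_fun measurableSet_Ioi fun x _ => h1 x
    _ = ∫ x in Iic (-(-q)), gaussianPDFReal (-m) 1 x := integral_comp_neg_Ioi _ _
    _ = ∫ x in Iic q, gaussianPDFReal (-m) 1 x := by rw [neg_neg]

end Stmt5Aux

open Stmt5Aux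

/-- One-sided Gaussian test with strictly negative mean yields a uniformly
conservative p-value: if `Z ~ N(μ,1)` with `μ < 0` and `P = Φ(-Z)` where `Φ`
is the standard Gaussian CDF, then the CDF `F` of `P` is convex on `[0,1]`,
hence `F (τ*x) ≤ x * F τ` for all `x, τ ∈ [0,1]`. -/
theorem stmt_5 {Ω : Type*} [MeasureSpace Ω] [IsProbabilityMeasure (ℙ : Measure Ω)]
    (μ : ℝ) (hμ : μ < 0) (Z : Ω → ℝ) (hZ : Measurable Z)
    (hlaw : Measure.map Z ℙ = gaussianReal μ 1)
    (Φ : ℝ → ℝ) (hΦ : ∀ t, Φ t = cdf (gaussianReal 0 1) t)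
    (F : ℝ → ℝ) (hF : ∀ t, F t = (ℙ {ω | Φ (-(Z ω)) ≤ t}).toReal) :
    ConvexOn ℝ (Set.Icc (0:ℝ) 1) F ∧
      ∀ x ∈ Set.Icc (0:ℝ) 1, ∀ τ ∈ Set.Icc (0:ℝ) 1, F (τ * x) ≤ x * F τ := by
  have hΦcdf : ∀ t, Φ t = ((gaussianReal 0 1) (Iic t)).toReal := fun t => by
    rw [hΦ, cdf_eq_real, measureReal_def]
  -- strict monotonicity of Φ
  have hmono : StrictMono Φ := by
    intro a b hab
    have h := cdf_diff' 0 hab.le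
    have hpos : 0 < ∫ x in Ioc a b, gaussianPDFReal 0 1 x := by
      rw [← intervalIntegral.integral_of_le hab.le]
      exact intervalIntegral.intervalIntegral_pos_of_pos_on
        (integrable_gaussianPDFReal 0 1).intervalIntegrable
        (fun x _ => gaussianPDFReal_pos 0 1 x one_ne_zero) hab
    rw [hΦcdf a, hΦcdf b]; linarith
  have hΦpos : ∀ t, 0 < Φ t := fun t => by
    have h0 : (0:ℝ) ≤ Φ (t - 1) := by rw [hΦ]; exact cdf_nonneg _ _
    have := hmono (show t - 1 < t by linarith)
    linarith
  have hΦle1 : ∀ t, Φ t ≤ 1 := fun t => by rw [hΦ]; exact cdf_le_one _ _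
  -- continuity of Φ
  have hprim : ∀ t, Φ t = Φ 0 + ∫ x in (0:ℝ)..t, gaussianPDFReal 0 1 x := by
    intro t
    rcases le_total 0 t with h | h
    · rw [intervalIntegral.integral_of_le h, ← cdf_diff' 0 h, hΦcdf, hΦcdf]; ring
    · rw [intervalIntegral.integral_symm, intervalIntegral.integral_of_le h,
        ← cdf_diff' 0 h, hΦcdf, hΦcdf]; ring
  have hcont : Continuous Φ := by
    have h : Continuous fun t => Φ 0 + ∫ x in (0:ℝ)..t, gaussianPDFReal 0 1 x :=
      continuous_const.add ((integrable_gaussianPDFReal 0 1).continuous_primitive 0)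
    exact h.congr fun t => (hprim t).symm
  -- surjectivity onto (0,1)
  have hsurj : ∀ t, 0 < t → t < 1 → ∃ q, Φ q = t := by
    intro t ht0 ht1
    have hbot : Filter.Tendsto Φ Filter.atBot (nhds 0) :=
      (tendsto_cdf_atBot (μ := gaussianReal 0 1)).congr fun x => (hΦ x).symm
    have htop : Filter.Tendsto Φ Filter.atTop (nhds 1) :=
      (tendsto_cdf_atTop (μ := gaussianReal 0 1)).congr fun x => (hΦ x).symm
    obtain ⟨a, ha⟩ := (hbot.eventually_lt_const ht0).exists
    obtain ⟨b, hb⟩ := (htop.eventually_const_lt ht1).exists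
    have hab : a ≤ b := (hmono.lt_iff_lt.1 (ha.trans hb)).le
    obtain ⟨q, _, hq⟩ := intermediate_value_Icc hab hcont.continuousOn ⟨ha.le, hb.le⟩
    exact ⟨q, hq⟩
  -- F in terms of the Gaussian measure
  have hΦmono' : Monotone Φ := fun a b hab => (hmono.le_iff_le).2 hab
  have hΦmeas : Measurable Φ := hΦmono'.measurable
  have hFν : ∀ t, F t = ((gaussianReal μ 1) {z : ℝ | Φ (-z) ≤ t}).toReal := by
    intro t
    have hset : MeasurableSet {z : ℝ | Φ (-z) ≤ t} :=
      measurableSet_le (hΦmeas.comp measurable_neg) measurable_const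
    rw [hF t, ← hlaw, Measure.map_apply hZ hset]
    rfl
  have hF0 : F 0 = 0 := by
    rw [hFν 0]
    have hs : {z : ℝ | Φ (-z) ≤ 0} = ∅ :=
      eq_empty_iff_forall_notMem.2 fun z hz => absurd hz (not_le.2 (hΦpos (-z)))
    simp [hs]
  have hF1 : F 1 = 1 := by
    rw [hFν 1]
    have hs : {z : ℝ | Φ (-z) ≤ 1} = univ := eq_univ_of_forall fun z => hΦle1 (-z)
    simp [hs]
  have hFq : ∀ t q, Φ q = t → F t = ((gaussianReal (-μ) 1) (Iic q)).toReal := by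
    intro t q hq
    rw [hFν t]
    have hs : {z : ℝ | Φ (-z) ≤ t} = Ici (-q) := by
      ext z
      simp only [mem_setOf_eq, mem_Ici, ← hq, hmono.le_iff_le, neg_le]
    rw [hs, flip' μ q]
  -- convexity via slopes
  have hconv : ConvexOn ℝ (Set.Icc (0:ℝ) 1) F := by
    refine convexOn_of_slope_mono_adjacent (convex_Icc 0 1) ?_
    intro x y z hx hz hxy hyz
    obtain ⟨qy, hqy⟩ := hsurj y (lt_of_le_of_lt hx.1 hxy) (lt_of_lt_of_le hyz hz.2)
    set c := Real.exp (-(μ*qy) - μ^2/2) with hc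
    have h1 : F y - F x ≤ c * (y - x) := by
      rcases eq_or_lt_of_le hx.1 with h0 | h0
    -- x = 0
      · rw [← h0, hF0, sub_zero, sub_zero, hFq y qy hqy, gmeas_toReal]
        have hy' : y = ∫ s in Iic qy, gaussianPDFReal 0 1 s := by
          rw [← hqy, hΦcdf, gmeas_toReal]
        rw [hy']
        exact upper' hμ measurableSet_Iic (subset_refl _)
      · obtain ⟨qx, hqx⟩ := hsurj x h0 (lt_of_lt_of_le (hxy.trans hyz) hz.2)
        have hqxy : qx < qy := by
          have := hmono.lt_iff_lt (a := qx) (b := qy)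
          rw [hqx, hqy] at this
          exact this.1 hxy
        rw [hFq y qy hqy, hFq x qx hqx, cdf_diff' (-μ) hqxy.le]
        have hD : y - x = ∫ s in Ioc qx qy, gaussianPDFReal 0 1 s := by
          rw [← hqy, ← hqx, hΦcdf, hΦcdf, cdf_diff' 0 hqxy.le]
        rw [hD]
        exact upper' hμ measurableSet_Ioc Ioc_subset_Iic_self
    have h2 : c * (z - y) ≤ F z - F y := by
      rcases eq_or_lt_of_le hz.2 with h1' | h1'
      -- z = 1
      · rw [h1', hF1, hFq y qy hqy, tail' (-μ) qy]
        have hD : 1 - y = ∫ s in Ioi qy, gaussianPDFReal 0 1 s := by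
          rw [← hqy, hΦcdf, tail' 0 qy]
        rw [hD]
        exact lower' hμ measurableSet_Ioi Ioi_subset_Ici_self
      · obtain ⟨qz, hqz⟩ := hsurj z (lt_trans (lt_of_le_of_lt hx.1 hxy) hyz) h1'
        have hqyz : qy < qz := by
          have := hmono.lt_iff_lt (a := qy) (b := qz)
          rw [hqy, hqz] at this
          exact this.1 hyz
        rw [hFq z qz hqz, hFq y qy hqy, cdf_diff' (-μ) hqyz.le]
        have hD : z - y = ∫ s in Ioc qy qz, gaussianPDFReal 0 1 s := by
          rw [← hqz, ← hqy, hΦcdf, hΦcdf, cdf_diff' 0 hqyz.le]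
        rw [hD]
        exact lower' hμ measurableSet_Ioc fun w hw => hw.1.le
    have hyx : (0:ℝ) < y - x := by linarith
    have hzy : (0:ℝ) < z - y := by linarith
    calc (F y - F x) / (y - x) ≤ c := by rw [div_le_iff₀ hyx]; linarith
      _ ≤ (F z - F y) / (z - y) := by rw [le_div_iff₀ hzy]; linarith
  refine ⟨hconv, ?_⟩
  intro x hx τ hτ
  have h0m : (0:ℝ) ∈ Set.Icc (0:ℝ) 1 := ⟨le_refl 0, zero_le_one⟩
  have h := hconv.2 hτ h0m (show (0:ℝ) ≤ x from hx.1)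
    (show (0:ℝ) ≤ 1 - x by linarith [hx.2]) (show x + (1 - x) = 1 by ring)
  simp only [smul_eq_mul, mul_zero, add_zero, hF0] at h
  rw [mul_comm τ x]
  linarith
end

section
/- (Inverse binomial lemma) Let a₁,…,aₘ ∈ [0,1], b ∈ (0,1], and let Z₁,…,Zₘ be independent Bernoulli(b) random variables. Define Z = 1 + Σᵢ aᵢ Zᵢ. Then 1/(1 + b·Σᵢ aᵢ) ≤ E[1/Z] ≤ 1/(b·(1 + Σᵢ aᵢ)). -/
open MeasureTheory ProbabilityTheory

lemma rpow_finset_sum {ι : Type*} (s : Finset ι) {t : ℝ} (ht : 0 ≤ t) {c : ι → ℝ}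
    (hc : ∀ i ∈ s, 0 ≤ c i) : t ^ (∑ i ∈ s, c i) = ∏ i ∈ s, t ^ c i := by
  rcases eq_or_lt_of_le ht with rfl | htpos
  · by_cases h : ∀ i ∈ s, c i = 0
    · rw [Finset.sum_eq_zero h]
      rw [Real.rpow_zero]
      exact (Finset.prod_eq_one (fun i hi => by rw [h i hi, Real.rpow_zero])).symm
    · push_neg at h
      obtain ⟨i, his, hi⟩ := h
      have hsum : 0 < ∑ j ∈ s, c j :=
        lt_of_lt_of_le (lt_of_le_of_ne (hc i his) (Ne.symm hi))
          (Finset.single_le_sum hc his)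
      rw [Real.zero_rpow (ne_of_gt hsum)]
      exact (Finset.prod_eq_zero his (Real.zero_rpow hi)).symm
  · rw [Real.rpow_def_of_pos htpos, Finset.mul_sum, Real.exp_sum]
    exact Finset.prod_congr rfl fun i _ => (Real.rpow_def_of_pos htpos _).symm

/-- Bernoulli-type factor bound: `t ^ (b * a) ≤ 1 - b + b * t ^ a`. -/
lemma factor_lower {t a b : ℝ} (ht : 0 ≤ t) (hb0 : 0 ≤ b) (hb1 : b ≤ 1) :
    t ^ (b * a) ≤ 1 - b + b * t ^ a := by
  have hy : (0:ℝ) ≤ t ^ a := Real.rpow_nonneg ht a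
  have : t ^ (b * a) = (1 + (t ^ a - 1)) ^ b := by
    rw [mul_comm, Real.rpow_mul ht]
    ring_nf
  rw [this]
  have := rpow_one_add_le_one_add_mul_self (by linarith : (-1:ℝ) ≤ t ^ a - 1) hb0 hb1
  linarith

/-- Concavity factor bound: `1 - b + b * t ^ a ≤ (1 - b + b * t) ^ a` for `a ∈ [0,1]`. -/
lemma factor_upper {t a b : ℝ} (ht : 0 ≤ t) (hb0 : 0 ≤ b) (hb1 : b ≤ 1)
    (ha0 : 0 ≤ a) (ha1 : a ≤ 1) :
    1 - b + b * t ^ a ≤ (1 - b + b * t) ^ a := by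
  have h := (Real.concaveOn_rpow ha0 ha1).2 (Set.mem_Ici.2 (zero_le_one)) (Set.mem_Ici.2 ht)
    (by linarith : (0:ℝ) ≤ 1 - b) hb0 (by ring)
  simpa [Real.one_rpow, smul_eq_mul] using h

set_option maxHeartbeats 1000000 in
lemma key_det (m : ℕ) (a : Fin m → ℝ) (ha : ∀ i, a i ∈ Set.Icc (0:ℝ) 1)
    (b : ℝ) (hb : b ∈ Set.Ioc (0:ℝ) 1) :
    1 / (1 + b * ∑ i, a i) ≤
      (∑ v : Fin m → Bool, (∏ i, (if v i then b else 1 - b)) *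
        (1 + ∑ i, a i * (if v i then 1 else 0))⁻¹) ∧
    (∑ v : Fin m → Bool, (∏ i, (if v i then b else 1 - b)) *
        (1 + ∑ i, a i * (if v i then 1 else 0))⁻¹) ≤ 1 / (b * (1 + ∑ i, a i)) := by
  obtain ⟨hb0, hb1⟩ := hb
  set σ : ℝ := ∑ i, a i with hσdef
  have hσ0 : 0 ≤ σ := Finset.sum_nonneg fun i _ => (ha i).1
  set p : (Fin m → Bool) → ℝ := fun v => ∏ i, (if v i then b else 1 - b) with hpdef
  set sv : (Fin m → Bool) → ℝ := fun v => ∑ i, a i * (if v i then 1 else 0) with hsvdef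
  have hsv0 : ∀ v, 0 ≤ sv v := fun v =>
    Finset.sum_nonneg fun i _ => mul_nonneg (ha i).1 (by positivity)
  have hp0 : ∀ v, 0 ≤ p v := fun v =>
    Finset.prod_nonneg fun i _ => by by_cases h : v i <;> simp [h] <;> linarith
  -- integral representation of (1+x)⁻¹
  have hint : ∀ x : ℝ, 0 ≤ x → (∫ t in (0:ℝ)..1, t ^ x) = (1 + x)⁻¹ := by
    intro x hx
    rw [integral_rpow (Or.inl (by linarith))]
    rw [Real.one_rpow, Real.zero_rpow (by positivity : x + 1 ≠ 0)]
    rw [inv_eq_one_div, add_comm]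
    ring
  have hII : ∀ x : ℝ, 0 ≤ x → ∀ c d : ℝ,
      IntervalIntegrable (fun t : ℝ => t ^ x) MeasureTheory.volume c d := fun x hx c d =>
    intervalIntegral.intervalIntegrable_rpow (Or.inl hx)
  -- F and its integrability
  set F : ℝ → ℝ := fun t => ∑ v : Fin m → Bool, p v * t ^ sv v with hFdef
  have hfun : F = ∑ v : Fin m → Bool, (fun t : ℝ => p v * t ^ sv v) := by
    funext t; simp [Finset.sum_apply]; rfl
  have hFI : IntervalIntegrable F MeasureTheory.volume 0 1 := by
    rw [hfun]; exact IntervalIntegrable.sum _ fun v _ => (hII _ (hsv0 v) 0 1).const_mul _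
  -- S = ∫ F
  have hS : (∑ v : Fin m → Bool, p v * (1 + sv v)⁻¹) = ∫ t in (0:ℝ)..1, F t := by
    rw [intervalIntegral.integral_finset_sum fun v _ => (hII _ (hsv0 v) 0 1).const_mul _]
    refine Finset.sum_congr rfl fun v _ => ?_
    rw [intervalIntegral.integral_const_mul, hint _ (hsv0 v)]
  -- product formula for F
  have hF : ∀ t : ℝ, 0 ≤ t → F t = ∏ i, (1 - b + b * t ^ a i) := by
    intro t ht
    have : ∀ i : Fin m, (1 - b + b * t ^ a i) =
        ∑ j : Bool, (if j then b * t ^ a i else 1 - b) := by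
      intro i; rw [Fintype.sum_bool]; simp [add_comm]
    rw [Finset.prod_congr rfl fun i _ => this i, Fintype.prod_sum]
    refine Finset.sum_congr rfl fun v _ => ?_
    rw [rpow_finset_sum _ ht (fun i _ => mul_nonneg (ha i).1 (by positivity)),
      ← Finset.prod_mul_distrib]
    refine Finset.prod_congr rfl fun i _ => ?_
    by_cases h : v i <;> simp [h]
  constructor
  · -- lower bound
    have hmono : (∫ t in (0:ℝ)..1, t ^ (b * σ)) ≤ ∫ t in (0:ℝ)..1, F t := by
      refine intervalIntegral.integral_mono_on (by norm_num) (hII _ (by positivity) 0 1) hFI ?_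
      intro t ht
      rw [hF t ht.1]
      rw [show b * σ = ∑ i, b * a i from Finset.mul_sum _ _ _,
        rpow_finset_sum _ ht.1 (fun i _ => mul_nonneg hb0.le (ha i).1)]
      exact Finset.prod_le_prod (fun i _ => Real.rpow_nonneg ht.1 _)
        (fun i _ => factor_lower ht.1 hb0.le hb1)
    rw [hint _ (by positivity)] at hmono
    rw [hS]
    calc 1 / (1 + b * σ) = (1 + b * σ)⁻¹ := (one_div _)
    _ ≤ _ := hmono
  · -- upper bound
    have hcont : ContinuousOn (fun t : ℝ => (1 - b + b * t) ^ σ) (Set.uIcc (0:ℝ) 1) :=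
      ContinuousOn.rpow_const
        ((continuous_const.add (continuous_const.mul continuous_id)).continuousOn)
        (fun x _ => Or.inr hσ0)
    have hGI : IntervalIntegrable (fun t : ℝ => (1 - b + b * t) ^ σ)
        MeasureTheory.volume 0 1 := hcont.intervalIntegrable
    have hmono : (∫ t in (0:ℝ)..1, F t) ≤ ∫ t in (0:ℝ)..1, (1 - b + b * t) ^ σ := by
      refine intervalIntegral.integral_mono_on (by norm_num) hFI hGI ?_
      intro t ht
      rw [hF t ht.1]
      have hbase : 0 ≤ 1 - b + b * t :=
        add_nonneg (by linarith) (mul_nonneg hb0.le ht.1)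
      rw [hσdef, rpow_finset_sum _ hbase (fun i _ => (ha i).1)]
      exact Finset.prod_le_prod
        (fun i _ => add_nonneg (by linarith) (mul_nonneg hb0.le (Real.rpow_nonneg ht.1 _)))
        (fun i _ => factor_upper ht.1 hb0.le hb1 (ha i).1 (ha i).2)
    -- compute the RHS integral bound
    have hcomp : (∫ t in (0:ℝ)..1, (1 - b + b * t) ^ σ)
        = b⁻¹ * ∫ u in (1-b : ℝ)..1, u ^ σ := by
      have : ∀ t : ℝ, (1 - b + b * t) ^ σ = (fun u : ℝ => u ^ σ) (b * t + (1 - b)) := by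
        intro t; simp only []; ring_nf
      rw [intervalIntegral.integral_congr (g := fun t => (fun u : ℝ => u ^ σ) (b * t + (1 - b)))
        (fun t _ => this t)]
      rw [intervalIntegral.integral_comp_mul_add (fun u : ℝ => u ^ σ) (ne_of_gt hb0) (1 - b)]
      norm_num
    have hsplit : (∫ u in (1-b:ℝ)..1, u ^ σ) ≤ (1 + σ)⁻¹ := by
      have hadd := intervalIntegral.integral_add_adjacent_intervals
        (hII σ hσ0 0 (1-b)) (hII σ hσ0 (1-b) 1)
      have hnn : 0 ≤ ∫ u in (0:ℝ)..(1-b), u ^ σ :=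
        intervalIntegral.integral_nonneg (by linarith) (fun u hu => Real.rpow_nonneg hu.1 _)
      have h01 := hint σ hσ0
      linarith [hadd, h01]
    rw [hS]
    calc (∫ t in (0:ℝ)..1, F t) ≤ b⁻¹ * ∫ u in (1-b:ℝ)..1, u ^ σ := by
          rw [← hcomp]; exact hmono
    _ ≤ b⁻¹ * (1 + σ)⁻¹ := by
          apply mul_le_mul_of_nonneg_left hsplit (by positivity)
    _ = 1 / (b * (1 + σ)) := by rw [one_div, mul_inv]

set_option synthInstance.maxHeartbeats 1000000 in
set_option maxHeartbeats 1000000 in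
/-- Inverse binomial lemma: for `a₁,…,aₘ ∈ [0,1]`, `b ∈ (0,1]`, and independent
Bernoulli(`b`) random variables `Z₁,…,Zₘ`, with `Z = 1 + Σᵢ aᵢ Zᵢ`,
`1/(1 + b Σᵢ aᵢ) ≤ E[1/Z] ≤ 1/(b (1 + Σᵢ aᵢ))`. -/
theorem stmt_7 {Ω : Type*} [MeasureSpace Ω] [IsProbabilityMeasure (ℙ : Measure Ω)]
    (m : ℕ) (a : Fin m → ℝ) (ha : ∀ i, a i ∈ Set.Icc (0:ℝ) 1)
    (b : ℝ) (hb : b ∈ Set.Ioc (0:ℝ) 1)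
    (Z : Fin m → Ω → ℝ) (hZmeas : ∀ i, Measurable (Z i))
    (hZval : ∀ i ω, Z i ω = 0 ∨ Z i ω = 1)
    (hZprob : ∀ i, (ℙ {ω | Z i ω = 1}).toReal = b)
    (hindep : iIndepFun Z ℙ) :
    1 / (1 + b * ∑ i, a i) ≤ (∫ ω, (1 + ∑ i, a i * Z i ω)⁻¹) ∧
      (∫ ω, (1 + ∑ i, a i * Z i ω)⁻¹) ≤ 1 / (b * (1 + ∑ i, a i)) := by
  classical
  set W : Ω → (Fin m → Bool) := fun ω i => if Z i ω = 1 then true else false with hW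
  have hs : ∀ i, MeasurableSet {ω | Z i ω = 1} := fun i => hZmeas i (measurableSet_singleton 1)
  have hWm : Measurable W := by
    apply measurable_pi_lambda
    intro i
    exact Measurable.ite (hs i) measurable_const measurable_const
  have hZW : ∀ i ω, Z i ω = (if W ω i then (1:ℝ) else 0) := by
    intro i ω
    rcases hZval i ω with h | h <;> simp [hW, h]
  set G : (Fin m → Bool) → ℝ := fun v => (1 + ∑ i, a i * (if v i then (1:ℝ) else 0))⁻¹
    with hG
  have hrw : (fun ω => (1 + ∑ i, a i * Z i ω)⁻¹) = fun ω => G (W ω) := by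
    funext ω
    have h : ∀ i : Fin m, a i * Z i ω = a i * (if W ω i then (1:ℝ) else 0) := fun i => by
      rw [hZW]
    simp only [hG, h]
  haveI : IsProbabilityMeasure (Measure.map W ℙ) := Measure.isProbabilityMeasure_map hWm.aemeasurable
  have hmap : (∫ ω, (1 + ∑ i, a i * Z i ω)⁻¹)
      = ∑ v : Fin m → Bool, ((Measure.map W ℙ) {v}).toReal * G v := by
    rw [hrw]
    rw [show (∫ ω, G (W ω)) = ∫ v, G v ∂(Measure.map W ℙ) from
      (integral_map hWm.aemeasurable (measurable_of_finite G).aestronglyMeasurable).symm]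
    rw [integral_fintype (μ := Measure.map W ℙ) (f := G) (Integrable.of_finite)]
    simp [smul_eq_mul, Measure.real]
  have hpoint : ∀ v : Fin m → Bool,
      ((Measure.map W ℙ) {v}).toReal = ∏ i, (if v i then b else 1 - b) := by
    intro v
    have hpre : W ⁻¹' {v} = ⋂ i, Z i ⁻¹' (if v i then ({1} : Set ℝ) else ({1}ᶜ : Set ℝ)) := by
      ext ω
      simp only [Set.mem_preimage, Set.mem_singleton_iff, funext_iff, Set.mem_iInter, hW]
      refine forall_congr' fun i => ?_
      by_cases hv : v i <;> by_cases hz : Z i ω = 1 <;>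
        simp [hv, hz]
    have h2 := hindep.measure_inter_preimage_eq_mul (S := Finset.univ)
      (sets := fun i => if v i then ({1} : Set ℝ) else ({1}ᶜ : Set ℝ))
      (fun i _ => by
        by_cases hv : v i <;>
          simp [hv, measurableSet_singleton, (measurableSet_singleton (1:ℝ)).compl])
    simp only [Finset.mem_univ, Set.iInter_true] at h2
    rw [Measure.map_apply hWm (measurableSet_singleton v), hpre, h2, ENNReal.toReal_prod]
    refine Finset.prod_congr rfl fun i _ => ?_
    by_cases hv : v i
    · simp only [hv, if_true]
      exact hZprob i
    · simp only [hv, Bool.false_eq_true, if_false]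
      have hc : Z i ⁻¹' (({1} : Set ℝ)ᶜ) = {ω | Z i ω = 1}ᶜ := rfl
      rw [hc, prob_compl_eq_one_sub (hs i),
        ENNReal.toReal_sub_of_le prob_le_one ENNReal.one_ne_top]
      rw [ENNReal.toReal_one, hZprob i]
  have hfinal := key_det m a ha b hb
  rw [hmap]
  have hsum : (∑ v : Fin m → Bool, ((Measure.map W ℙ) {v}).toReal * G v)
      = ∑ v : Fin m → Bool, (∏ i, (if v i then b else 1 - b)) * G v :=
    Finset.sum_congr rfl fun v _ => by rw [hpoint v]
  rw [hsum]
  exact hfinal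
end

section
/- Let P₁,…,Pₙ be independent [0,1]-valued random variables with P(Pⱼ ≤ x) ≤ x for all x and all j in a set H₀ ⊆ {1,…,n}. Fix constants α_j, λ_j, τ_j ∈ (0,1) with λ_j < τ_j and α_j ≤ λ_j. If each null Pⱼ satisfies F_j(τx) ≤ x·F_j(τ) for all x, τ, then E[Σ_{j∈H₀} 1{Pⱼ ≤ αⱼ}] ≤ E[Σ_{j∈H₀} αⱼ · 1{λⱼ < Pⱼ ≤ τⱼ}/(τⱼ − λⱼ)]. -/
open MeasureTheory ProbabilityTheory

/-- Deterministic-threshold version of the key ADDIS inequality: for independent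
p-values whose nulls are valid and uniformly conservative, and constants
`αⱼ ≤ λⱼ < τⱼ`, the expected number of false rejections is bounded by the
expected ADDIS numerator. -/
theorem stmt_8 {Ω : Type*} [MeasureSpace Ω] [IsProbabilityMeasure (ℙ : Measure Ω)]
    (n : ℕ) (P : Fin n → Ω → ℝ) (hPmeas : ∀ j, Measurable (P j))
    (hPrange : ∀ j ω, P j ω ∈ Set.Icc (0:ℝ) 1)
    (hindep : iIndepFun P ℙ)
    (H₀ : Finset (Fin n))
    (hvalid : ∀ j ∈ H₀, ∀ x ∈ Set.Icc (0:ℝ) 1, (ℙ {ω | P j ω ≤ x}).toReal ≤ x)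
    (α lam τ : Fin n → ℝ)
    (hα : ∀ j, α j ∈ Set.Ioo (0:ℝ) 1) (hlam : ∀ j, lam j ∈ Set.Ioo (0:ℝ) 1)
    (hτ : ∀ j, τ j ∈ Set.Ioo (0:ℝ) 1)
    (hlt : ∀ j, lam j < τ j) (hle : ∀ j, α j ≤ lam j)
    (F : Fin n → ℝ → ℝ) (hF : ∀ j t, F j t = (ℙ {ω | P j ω ≤ t}).toReal)
    (hcons : ∀ j ∈ H₀, ∀ x ∈ Set.Icc (0:ℝ) 1, ∀ t ∈ Set.Icc (0:ℝ) 1,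
      F j (t * x) ≤ x * F j t) :
    (∫ ω, ∑ j ∈ H₀, Set.indicator {ω' | P j ω' ≤ α j} (fun _ => (1:ℝ)) ω) ≤
      ∫ ω, ∑ j ∈ H₀,
        Set.indicator {ω' | lam j < P j ω' ∧ P j ω' ≤ τ j}
          (fun _ => α j / (τ j - lam j)) ω := by
  have hmeasA : ∀ j (x : ℝ), MeasurableSet {ω | P j ω ≤ x} := fun j x =>
    measurableSet_le (hPmeas j) measurable_const
  have hmeasB : ∀ j, MeasurableSet {ω | lam j < P j ω ∧ P j ω ≤ τ j} := fun j =>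
    (measurableSet_lt measurable_const (hPmeas j)).inter (hmeasA j (τ j))
  have key : ∀ j ∈ H₀,
      (ℙ {ω | P j ω ≤ α j}).toReal ≤
        α j / (τ j - lam j) * (ℙ {ω | lam j < P j ω ∧ P j ω ≤ τ j}).toReal := by
    intro j hj
    obtain ⟨ha0, ha1⟩ := hα j
    obtain ⟨hl0, hl1⟩ := hlam j
    obtain ⟨ht0, ht1⟩ := hτ j
    have hlt' := hlt j
    have hle' := hle j
    have hdiff : {ω | lam j < P j ω ∧ P j ω ≤ τ j}
        = {ω | P j ω ≤ τ j} \ {ω | P j ω ≤ lam j} := by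
      ext ω; simp only [Set.mem_setOf_eq, Set.mem_diff, not_le]; tauto
    have hsub : {ω | P j ω ≤ lam j} ⊆ {ω | P j ω ≤ τ j} :=
      fun ω h => le_trans h hlt'.le
    have hmeas_eq : (ℙ {ω | lam j < P j ω ∧ P j ω ≤ τ j}).toReal
        = F j (τ j) - F j (lam j) := by
      rw [hdiff, measure_diff hsub (hmeasA j (lam j)).nullMeasurableSet (measure_ne_top _ _),
        ENNReal.toReal_sub_of_le (measure_mono hsub) (measure_ne_top _ _), hF, hF]
    have heqa : τ j * (α j / τ j) = α j := by field_simp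
    have heql : τ j * (lam j / τ j) = lam j := by field_simp
    have hFa : F j (α j) ≤ (α j / τ j) * F j (τ j) := by
      have h := hcons j hj (α j / τ j)
        ⟨by positivity, by rw [div_le_one ht0]; linarith⟩ (τ j) ⟨ht0.le, ht1.le⟩
      rwa [heqa] at h
    have hFl : F j (lam j) ≤ (lam j / τ j) * F j (τ j) := by
      have h := hcons j hj (lam j / τ j)
        ⟨by positivity, by rw [div_le_one ht0]; linarith⟩ (τ j) ⟨ht0.le, ht1.le⟩
      rwa [heql] at h
    have hFt0 : 0 ≤ F j (τ j) := by rw [hF]; exact ENNReal.toReal_nonneg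
    have hFeq : F j (α j) = (ℙ {ω | P j ω ≤ α j}).toReal := hF j (α j)
    rw [← hFeq, hmeas_eq]
    rw [div_mul_eq_mul_div, le_div_iff₀ (by linarith)]
    have h1 : F j (τ j) - F j (lam j) ≥ F j (τ j) * (τ j - lam j) / τ j := by
      rw [ge_iff_le, div_le_iff₀ ht0]
      nlinarith
    calc F j (α j) * (τ j - lam j) ≤ (α j / τ j) * F j (τ j) * (τ j - lam j) := by
          nlinarith
      _ = α j * (F j (τ j) * (τ j - lam j) / τ j) := by field_simp
      _ ≤ α j * (F j (τ j) - F j (lam j)) := by nlinarith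
  have hint1 : ∀ j ∈ H₀, Integrable
      (fun ω => Set.indicator {ω' | P j ω' ≤ α j} (fun _ => (1:ℝ)) ω) := by
    intro j _
    exact (integrable_const (1:ℝ)).indicator (hmeasA j (α j))
  have hint2 : ∀ j ∈ H₀, Integrable
      (fun ω => Set.indicator {ω' | lam j < P j ω' ∧ P j ω' ≤ τ j}
        (fun _ => α j / (τ j - lam j)) ω) := by
    intro j _
    exact (integrable_const _).indicator (hmeasB j)
  rw [integral_finset_sum _ hint1, integral_finset_sum _ hint2]
  refine Finset.sum_le_sum fun j hj => ?_
  rw [integral_indicator_const _ (hmeasA j (α j)),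
    integral_indicator_const _ (hmeasB j)]
  have := key j hj
  simp only [smul_eq_mul, mul_one, measureReal_def]
  linarith [this, mul_comm (α j / (τ j - lam j))
    ((ℙ {ω | lam j < P j ω ∧ P j ω ≤ τ j}).toReal)]
end

section
/- Let P be a [0,1]-valued random variable with CDF F satisfying F(τx) ≤ x·F(τ) for all x, τ ∈ [0,1]. Then for any constants 0 < α ≤ λ < τ ≤ 1 with F(τ) > 0: P(P ≤ α) ≤ (α/τ)·F(τ) ≤ (α/(τ−λ))·P(λ < P ≤ τ). -/
/-!
Conservativeness with `x = α/τ` is the first inequality. With `x = λ/τ` it gives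
`F(λ) ≤ (λ/τ) F(τ)`, hence `P(λ < P ≤ τ) ≥ F(τ) - F(λ) ≥ (1 - λ/τ) F(τ)`, which is the second.
-/

open MeasureTheory ProbabilityTheory

def UniformlyConservative (F : ℝ → ℝ) : Prop :=
  ∀ x ∈ Set.Icc (0:ℝ) 1, ∀ τ ∈ Set.Icc (0:ℝ) 1, F (τ * x) ≤ x * F τ

theorem UniformlyConservative.le_div_mul {F : ℝ → ℝ} (hF : UniformlyConservative F)
    {t τ : ℝ} (ht : 0 ≤ t) (htτ : t ≤ τ) (hτ₀ : 0 < τ) (hτ₁ : τ ≤ 1) :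
    F t ≤ t / τ * F τ := by
  have h := hF (t / τ) ⟨div_nonneg ht hτ₀.le, (div_le_one hτ₀).2 htτ⟩ τ ⟨hτ₀.le, hτ₁⟩
  rwa [mul_div_cancel₀ t hτ₀.ne'] at h

theorem sub_le_measureReal_setOf_lt_and_le {Ω : Type*} [MeasurableSpace Ω] (μ : Measure Ω)
    [IsFiniteMeasure μ] (P : Ω → ℝ) (a b : ℝ) :
    μ.real {ω | P ω ≤ b} - μ.real {ω | P ω ≤ a} ≤ μ.real {ω | a < P ω ∧ P ω ≤ b} := by
  have hslab : {ω | a < P ω ∧ P ω ≤ b} = {ω | P ω ≤ b} \ {ω | P ω ≤ a} := by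
    ext ω; simp [and_comm]
  rw [hslab]
  exact le_measureReal_sdiff

theorem stmt_9_general {Ω : Type*} [MeasureSpace Ω] [IsProbabilityMeasure (ℙ : Measure Ω)]
    (P : Ω → ℝ)
    (F : ℝ → ℝ) (hF : ∀ t, F t = (ℙ {ω | P ω ≤ t}).toReal)
    (hcons : ∀ x ∈ Set.Icc (0:ℝ) 1, ∀ τ ∈ Set.Icc (0:ℝ) 1, F (τ * x) ≤ x * F τ)
    (α lam τ : ℝ) (hα : 0 < α) (hαlam : α ≤ lam) (hlamτ : lam < τ) (hτ : τ ≤ 1) :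
    (ℙ {ω | P ω ≤ α}).toReal ≤ (α / τ) * F τ ∧
      (α / τ) * F τ ≤ (α / (τ - lam)) * (ℙ {ω | lam < P ω ∧ P ω ≤ τ}).toReal := by
  have hcons : UniformlyConservative F := hcons
  have hτ₀ : 0 < τ := by linarith
  have hτlam : 0 < τ - lam := sub_pos.2 hlamτ
  refine ⟨hF α ▸ hcons.le_div_mul hα.le (by linarith) hτ₀ hτ, ?_⟩
  have hFlam := hcons.le_div_mul (by linarith) hlamτ.le hτ₀ hτ
  calc α / τ * F τ = α / (τ - lam) * ((1 - lam / τ) * F τ) := by field_simp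
    _ ≤ α / (τ - lam) * (F τ - F lam) := by gcongr; linarith
    _ ≤ α / (τ - lam) * (ℙ {ω | lam < P ω ∧ P ω ≤ τ}).toReal := by
      gcongr
      simpa only [hF, measureReal_def] using sub_le_measureReal_setOf_lt_and_le ℙ P lam τ

/-- Single-hypothesis core of the ADDIS mFDR proof: for a uniformly conservative
p-value `P` with CDF `F` and constants `0 < α ≤ λ < τ ≤ 1` with `F τ > 0`,
`P(P ≤ α) ≤ (α/τ)·F(τ) ≤ (α/(τ−λ))·P(λ < P ≤ τ)`. -/
theorem stmt_9 {Ω : Type*} [MeasureSpace Ω] [IsProbabilityMeasure (ℙ : Measure Ω)]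
    (P : Ω → ℝ) (hP : Measurable P) (hrange : ∀ ω, P ω ∈ Set.Icc (0:ℝ) 1)
    (F : ℝ → ℝ) (hF : ∀ t, F t = (ℙ {ω | P ω ≤ t}).toReal)
    (hcons : ∀ x ∈ Set.Icc (0:ℝ) 1, ∀ τ ∈ Set.Icc (0:ℝ) 1, F (τ * x) ≤ x * F τ)
    (α lam τ : ℝ) (hα : 0 < α) (hαlam : α ≤ lam) (hlamτ : lam < τ) (hτ : τ ≤ 1)
    (hFτ : 0 < F τ) :
    (ℙ {ω | P ω ≤ α}).toReal ≤ (α / τ) * F τ ∧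
      (α / τ) * F τ ≤ (α / (τ - lam)) * (ℙ {ω | lam < P ω ∧ P ω ≤ τ}).toReal :=
  stmt_9_general P F hF hcons α lam τ hα hαlam hlamτ hτ
end
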